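/- arXiv:2106.04467 — 3 statements merged into one kernel-verified Lean document; each statement's English description precedes it below -/
import Mathlib

section
/- Fix a group g ∈ {1,…,k} and a value v ∈ V. Conditionally on G = g and V = v, for every row index j ∈ {1,…,k} with j ≠ g and every v' ∈ V, the entry of the decoded query column in row j is uniform: Pr(Q(j, A) = v' | G = g, V = v) = 1/(2m). -/
open scoped BigOperators

noncomputable section

/-- The value alphabet `V = {±1, …, ±m} ⊆ ℤ`. -/
def Vset (m : ℕ) : Finset ℤ := (Finset.Icc (-(m : ℤ)) m).erase 0

/-- Values as a (finite) type. -/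
abbrev Vt (m : ℕ) : Type := {v : ℤ // v ∈ Vset m}

/-- Query matrices: `k × 2m` matrices whose rows are permutations of `V`,
encoded row-wise as equivalences between column indices and values. -/
abbrev Query (k m : ℕ) : Type := Fin k → (Fin (2*m) ≃ Vt m)

/-- The randomized response channel `RR_λ` on `V`: probability that input `v`
is turned into output `w`. -/
def RR (m : ℕ) (lam : ℝ) (v w : Vt m) : ℝ :=
  if w = v then 1 - lam else lam / (2*m - 1)

/-! Relabelling two values `a, b` in a row `j ≠ g` of the query is a bijection of `𝒬` that keeps
row `g`, hence the answer column, and exchanges the events `Q(j, A) = a` and `Q(j, A) = b`.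
So for every output `w` of the channel, `Q(j, A)` is uniform on `V`; averaging over
`w ~ RR_λ(v)` leaves it uniform. -/

open Finset

theorem card_Vt (m : ℕ) : Fintype.card (Vt m) = 2 * m := by
  rw [Fintype.card_coe, Vset, card_erase_of_mem (by simp), Int.card_Icc]
  omega

theorem sum_RR (m : ℕ) (lam : ℝ) (v : Vt m) : ∑ w : Vt m, RR m lam v w = 1 := by
  have hm : 1 ≤ 2 * m := card_Vt m ▸ Fintype.card_pos_iff.mpr ⟨v⟩
  have h2m_sub_one : (2 * m - 1 : ℝ) ≠ 0 := by
    rw [← Nat.cast_ofNat, ← Nat.cast_mul, ← Nat.cast_one, ← Nat.cast_sub hm]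
    exact Nat.cast_ne_zero.mpr (by omega)
  have off_diag : ∀ w ∈ univ.erase v, RR m lam v w = lam / (2 * m - 1) :=
    fun w hw => if_neg (ne_of_mem_erase hw)
  rw [← add_sum_erase univ _ (mem_univ v), sum_congr rfl off_diag, RR, if_pos rfl, sum_const,
    card_erase_of_mem (mem_univ v), card_univ, card_Vt, nsmul_eq_mul, Nat.cast_sub hm]
  push_cast
  field_simp
  ring

theorem card_mul_card_fiber_eq_card {X α : Type*} [Fintype X] [Fintype α] [DecidableEq α]
    (f : X → α) (a : α) (h : ∀ b, #{x | f x = b} = #{x | f x = a}) :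
    Fintype.card α * #{x | f x = a} = Fintype.card X := by
  have := card_eq_sum_card_fiberwise (f := f) (s := univ) (t := univ) (by simp)
  rw [card_univ] at this
  simp [this, h]

section RowPermutations

variable {κ ι α : Type*} [DecidableEq κ] [Fintype κ] [Fintype ι] [DecidableEq ι] [Fintype α]
  [DecidableEq α] {g j : κ}

theorem card_fiber_apply_symm_eq (hj : j ≠ g) (w a b : α) :
    #{q : κ → ι ≃ α | q j ((q g).symm w) = b} = #{q : κ → ι ≃ α | q j ((q g).symm w) = a} := by
  let swapRow (q : κ → ι ≃ α) : κ → ι ≃ α :=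
    Function.update q j ((q j).trans (Equiv.swap a b))
  have swapRow_g (q) : swapRow q g = q g := Function.update_of_ne hj.symm _ _
  have swapRow_j (q) : swapRow q j = (q j).trans (Equiv.swap a b) := Function.update_self _ _ _
  have swapRow_swapRow (q) : swapRow (swapRow q) = q := by
    simp only [swapRow, Function.update_idem, Function.update_self, Equiv.trans_assoc,
      Equiv.swap_swap, Equiv.trans_refl, Function.update_eq_self]
  refine card_nbij' swapRow swapRow ?_ ?_ (fun q _ => swapRow_swapRow q)
    (fun q _ => swapRow_swapRow q)
  · intro q hq
    simp only [coe_filter, mem_univ, true_and, Set.mem_ofPred_eq, swapRow_g, swapRow_j,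
      Equiv.trans_apply] at hq ⊢
    rw [hq, Equiv.swap_apply_right]
  · intro q hq
    simp only [coe_filter, mem_univ, true_and, Set.mem_ofPred_eq, swapRow_g, swapRow_j,
      Equiv.trans_apply] at hq ⊢
    rw [hq, Equiv.swap_apply_left]

theorem sum_div_card_ite_apply_symm_eq (hcard : Fintype.card ι = Fintype.card α) (hj : j ≠ g)
    (w a : α) :
    ∑ q : κ → ι ≃ α, 1 / (Fintype.card (κ → ι ≃ α) : ℝ) *
        (if q j ((q g).symm w) = a then 1 else 0) = 1 / Fintype.card α := by
  have hfiber := card_mul_card_fiber_eq_card _ a (card_fiber_apply_symm_eq (ι := ι) hj w a)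
  have : Nonempty (ι ≃ α) := Fintype.card_eq.mp hcard
  have hfiber_ne : #{q : κ → ι ≃ α | q j ((q g).symm w) = a} ≠ 0 :=
    right_ne_zero_of_mul (hfiber ▸ Fintype.card_ne_zero)
  rw [← mul_sum, sum_boole, ← hfiber, one_div_mul_eq_div, Nat.cast_mul,
    div_mul_cancel_right₀ (Nat.cast_ne_zero.mpr hfiber_ne), one_div]

end RowPermutations

theorem stmt3_general (m k : ℕ)
    (lam : ℝ)
    (g : Fin k) (v : Vt m) (j : Fin k) (hj : j ≠ g) (v' : Vt m) :
    (∑ q : Query k m, ∑ w : Vt m,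
        (1 / (Fintype.card (Query k m) : ℝ)) * RR m lam v w *
          (if q j ((q g).symm w) = v' then (1:ℝ) else 0))
      = 1 / (2*m) := by
  have hcols : Fintype.card (Fin (2 * m)) = Fintype.card (Vt m) := by
    rw [Fintype.card_fin, card_Vt]
  calc _ = ∑ w : Vt m, RR m lam v w * ∑ q : Query k m,
          1 / (Fintype.card (Query k m) : ℝ) * (if q j ((q g).symm w) = v' then 1 else 0) := by
        rw [sum_comm]
        exact sum_congr rfl fun w _ => by rw [mul_sum]; exact sum_congr rfl fun q _ => by ring
    _ = ∑ w : Vt m, RR m lam v w * (1 / (2 * m)) := by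
        simp only [sum_div_card_ite_apply_symm_eq hcols hj, card_Vt, Nat.cast_mul,
          Nat.cast_ofNat]
    _ = 1 / (2 * m) := by rw [← sum_mul, sum_RR, one_mul]

/-- Conditionally on `G = g` and `V = v`, for every row `j ≠ g`
and every `v' ∈ V`, the decoded query-column entry in row `j` is uniform:
`Pr(Q(j,A) = v' | G = g, V = v) = 1/(2m)`. The conditional law is computed
from the model: `Q` uniform on `𝒬`, `V̊ = RR_λ(v)` independent of `Q`, and
`A` the column of row `g` of `Q` containing `V̊`. -/
theorem stmt3 (m k : ℕ) (hm : 0 < m) (hk : 2 ≤ k)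
    (p : Fin k → Vt m → ℝ)
    (hpsum : ∀ g, ∑ v : Vt m, p g v = 1)
    (hp : ∀ g v, 0 < p g v ∧ p g v < 1)
    (lam : ℝ) (hlam0 : 0 ≤ lam) (hlam1 : lam < 1 - 1/(2*m))
    (g : Fin k) (v : Vt m) (j : Fin k) (hj : j ≠ g) (v' : Vt m) :
    (∑ q : Query k m, ∑ w : Vt m,
        (1 / (Fintype.card (Query k m) : ℝ)) * RR m lam v w *
          (if q j ((q g).symm w) = v' then (1:ℝ) else 0))
      = 1 / (2*m) :=
  stmt3_general m k lam g v j hj v'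
end
end

section
/- Define X(j) := V·1{G = j} for each row index j ∈ {1,…,k}. Then for every j, E[X(j)·Q(j, A)] = ((2m − 2mλ − 1)/(2m−1))·θ_j·μ₂(j), where μ₂(j) = Σ_{v∈V} v²·p_j(v) is the conditional second moment of a user's value given group j. -/
open scoped BigOperators

noncomputable section

lemma cardVt (m : ℕ) : Fintype.card (Vt m) = 2*m := by
  rw [Fintype.card_coe]
  unfold Vset
  rw [Finset.card_erase_of_mem (by simp), Int.card_Icc]
  omega

lemma sumV (m : ℕ) : ∑ v : Vt m, ((v : ℤ) : ℝ) = 0 := by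
  have h : ∑ v ∈ Vset m, (v : ℤ) = 0 := by
    refine Finset.sum_involution (fun a _ => -a) (fun a ha => by ring) ?_ ?_ (fun a ha => by ring)
    · intro a ha hne
      have h0 : a ≠ 0 := (Finset.mem_erase.mp ha).1
      show -a ≠ a
      omega
    · intro a ha
      simp only [Vset, Finset.mem_erase, Finset.mem_Icc] at ha ⊢
      omega
  have h2 := congrArg (Int.cast : ℤ → ℝ) h
  push_cast at h2
  rw [Finset.sum_coe_sort (Vset m) (fun v : ℤ => (v : ℝ))]
  exact h2

lemma keyw (m : ℕ) (hm : 0 < m) (lam : ℝ) (v0 : Vt m) :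
    ∑ w : Vt m, RR m lam v0 w * ((w : ℤ) : ℝ)
      = ((2*m - 2*m*lam - 1)/(2*m - 1)) * ((v0 : ℤ) : ℝ) := by
  have h2m1 : (2*(m:ℝ) - 1) ≠ 0 := by
    have : (1:ℝ) ≤ (m:ℝ) := by exact_mod_cast hm
    nlinarith
  have expand : ∀ w : Vt m, RR m lam v0 w * ((w : ℤ) : ℝ)
      = (lam/(2*(m:ℝ)-1)) * ((w : ℤ) : ℝ)
        + (if w = v0 then (1 - lam - lam/(2*(m:ℝ)-1)) * ((w : ℤ) : ℝ) else 0) := by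
    intro w
    by_cases h : w = v0 <;> simp [RR, h] <;> ring
  rw [Finset.sum_congr rfl (fun w _ => expand w), Finset.sum_add_distrib,
    ← Finset.mul_sum, sumV]
  simp only [Finset.sum_ite_eq' Finset.univ v0, Finset.mem_univ, if_true, mul_zero, zero_add]
  have hc : (1 - lam - lam/(2*(m:ℝ)-1)) = (2*(m:ℝ) - 2*m*lam - 1)/(2*(m:ℝ)-1) := by
    field_simp
    ring
  rw [hc]

/-- With `X(j) := V·1{G = j}`, for every row `j`,
`E[X(j)·Q(j,A)] = ((2m − 2mλ − 1)/(2m−1))·θ_j·μ₂(j)`, with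
`μ₂(j) = Σ_{v∈V} v²·p_j(v)`. The expectation is over the joint model:
`G ~ θ`, `V ~ p_G`, `Q` uniform on `𝒬`, `V̊ = RR_λ(V)`, `A` the column of
row `G` of `Q` containing `V̊`. -/
theorem stmt6 (m k : ℕ) (hm : 0 < m) (hk : 2 ≤ k)
    (p : Fin k → Vt m → ℝ)
    (hpsum : ∀ g, ∑ v : Vt m, p g v = 1)
    (hp : ∀ g v, 0 < p g v ∧ p g v < 1)
    (θ : Fin k → ℝ) (hθ0 : ∀ g, 0 ≤ θ g) (hθ1 : ∑ g, θ g = 1)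
    (lam : ℝ) (hlam0 : 0 ≤ lam) (hlam1 : lam < 1 - 1/(2*m))
    (j : Fin k) :
    (∑ g : Fin k, ∑ v0 : Vt m, ∑ q : Query k m, ∑ w : Vt m,
        θ g * p g v0 * (1 / (Fintype.card (Query k m) : ℝ)) * RR m lam v0 w *
          ((if g = j then ((v0 : ℤ) : ℝ) else 0) *
            ((q j ((q g).symm w) : ℤ) : ℝ)))
      = ((2*m - 2*m*lam - 1) / (2*m - 1)) * θ j *
          (∑ v : Vt m, ((v : ℤ) : ℝ)^2 * p j v) := by
  have hne : Nonempty (Fin (2*m) ≃ Vt m) := by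
    rw [← Fintype.card_eq, Fintype.card_fin, cardVt]
  have hQne : Nonempty (Query k m) := ⟨fun _ => Classical.choice hne⟩
  have hQpos : (0:ℝ) < (Fintype.card (Query k m) : ℝ) := by
    exact_mod_cast Fintype.card_pos
  rw [Finset.sum_eq_single_of_mem j (Finset.mem_univ j)
    (fun b _ hb => by simp [hb])]
  simp only [eq_self_iff_true, if_true, Equiv.apply_symm_apply]
  have step : ∀ v0 : Vt m,
      (∑ q : Query k m, ∑ w : Vt m,
        θ j * p j v0 * (1 / (Fintype.card (Query k m) : ℝ)) * RR m lam v0 w *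
          (((v0 : ℤ) : ℝ) * ((w : ℤ) : ℝ)))
      = θ j * p j v0 * (((v0 : ℤ) : ℝ) * (∑ w : Vt m, RR m lam v0 w * ((w : ℤ) : ℝ))) := by
    intro v0
    have hc : (Fintype.card (Query k m) : ℝ) ≠ 0 := ne_of_gt hQpos
    rw [Finset.sum_const, Finset.card_univ, nsmul_eq_mul, Finset.mul_sum,
      Finset.mul_sum, Finset.mul_sum]
    refine Finset.sum_congr rfl (fun w _ => ?_)
    field_simp
  rw [Finset.sum_congr rfl (fun v0 _ => step v0)]
  rw [Finset.sum_congr rfl (fun v0 _ => by rw [keyw m hm lam v0])]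
  rw [Finset.mul_sum]
  refine Finset.sum_congr rfl (fun v0 _ => ?_)
  push_cast
  ring
end
end

section
/- The RG estimator satisfies E[‖Ŝ_RG − S‖²] = n·β₃, where the squared Euclidean norm is over the k coordinates, β₃ = E[V²]·((2m−1)/((1−λ_gr)(2m(1−λ_vl)−1)) − 1) + (4m² − 1)(m+1)·(2m·λ_vl·(1−λ_gr) + λ_gr·(2m−1))/(6·(1−λ_gr)²·(2m(1−λ_vl)−1)²), and E[V²] = Σ_{g=1}^k θ_g·Σ_{v∈V} v²·p_g(v). Equivalently, the relative mean square error (1/n²)·E[‖Ŝ_RG − S‖²] equals β₃/n. (Theorem 2, part 3.) -/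
open scoped BigOperators

noncomputable section

/-- The RG randomization channel: probability that a user with true group `g`
and true value `v` outputs the pair `(h, w)`. With probability `1 − λ_gr` he
keeps his group (`h = g`) and reports `w = RR_{λ_vl}(v)`; with probability
`λ_gr/(k−1)` he reports each other group, together with a uniform value. -/
def RGch (k m : ℕ) (lgr lvl : ℝ) (g : Fin k) (v : Vt m)
    (h : Fin k) (w : Vt m) : ℝ :=
  if h = g then (1 - lgr) * RR m lvl v w else (lgr / ((k : ℝ) - 1)) * (1 / (2*m))
/-- One RG user's outcome: his group, value, reported group and reported value. -/
abbrev OmegaRG (k m : ℕ) : Type := Fin k × Vt m × Fin k × Vt m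

/-- Probability weight of a single RG user's outcome `(g, v, g̊, v̊)`:
`θ(g)·p_g(v)·RGch(g̊, v̊ | g, v)` (`G ~ θ`; given `G = g`, `V ~ p_g`; the
pair `(G̊, V̊)` is produced by the RG randomization channel). -/
def wRG (k m : ℕ) (θ : Fin k → ℝ) (p : Fin k → Vt m → ℝ) (lgr lvl : ℝ)
    (ω : OmegaRG k m) : ℝ :=
  θ ω.1 * p ω.1 ω.2.1 * RGch k m lgr lvl ω.1 ω.2.1 ω.2.2.1 ω.2.2.2

/-- True aggregate of group `g`: `S(g) = Σ_{i : G_i = g} V_i`. -/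
def trueAggRG (k m n : ℕ) (ω : Fin n → OmegaRG k m) (g : Fin k) : ℝ :=
  ∑ i, if (ω i).1 = g then (((ω i).2.1 : ℤ) : ℝ) else 0

/-- The RG estimator
`Ŝ_RG(g) = ((2m−1)/((1−λ_gr)(2m(1−λ_vl)−1)))·Σ_{i : G̊_i = g} V̊_i`. -/
def estRG (k m n : ℕ) (lgr lvl : ℝ) (ω : Fin n → OmegaRG k m) (g : Fin k) : ℝ :=
  ((2*m - 1) / ((1 - lgr) * (2*m*(1 - lvl) - 1))) *
    ∑ i, if (ω i).2.2.1 = g then (((ω i).2.2.2 : ℤ) : ℝ) else 0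
set_option maxRecDepth 10000

lemma card_Vset (m : ℕ) : (Vset m).card = 2*m := by
  unfold Vset
  rw [Finset.card_erase_of_mem (by simp), Int.card_Icc]
  omega

lemma Vset_succ (m : ℕ) :
    Vset (m+1) = insert ((m:ℤ)+1) (insert (-(m:ℤ)-1) (Vset m)) := by
  ext x
  simp only [Vset, Finset.mem_erase, Finset.mem_Icc, Finset.mem_insert]
  push_cast
  omega

lemma sum_Vset_id (m : ℕ) : ∑ v ∈ Vset m, v = 0 := by
  induction m with
  | zero => simp [Vset]
  | succ m ih =>
    rw [Vset_succ, Finset.sum_insert, Finset.sum_insert, ih]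
    · ring
    · simp only [Vset, Finset.mem_erase, Finset.mem_Icc]; omega
    · simp only [Vset, Finset.mem_erase, Finset.mem_Icc, Finset.mem_insert]; omega

lemma sum_Vset_sq (m : ℕ) : 3 * ∑ v ∈ Vset m, v^2 = m*(m+1)*(2*m+1) := by
  induction m with
  | zero => simp [Vset]
  | succ m ih =>
    rw [Vset_succ, Finset.sum_insert, Finset.sum_insert, mul_add, mul_add, ih]
    · push_cast; ring
    · simp only [Vset, Finset.mem_erase, Finset.mem_Icc]; omega
    · simp only [Vset, Finset.mem_erase, Finset.mem_Icc, Finset.mem_insert]; omega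

lemma sum_Vt_one (m : ℕ) : ∑ _v : Vt m, (1:ℝ) = 2*m := by
  rw [Finset.sum_const]
  simp [Finset.card_univ, Fintype.card_coe, card_Vset]

lemma sum_Vt_id (m : ℕ) : ∑ v : Vt m, ((v:ℤ):ℝ) = 0 := by
  rw [Finset.sum_coe_sort (Vset m) (fun v => (v:ℝ))]
  rw [← Int.cast_sum, sum_Vset_id]
  simp

lemma sum_Vt_sq (m : ℕ) : ∑ v : Vt m, ((v:ℤ):ℝ)^2 = (m*(m+1)*(2*m+1) : ℝ)/3 := by
  rw [Finset.sum_coe_sort (Vset m) (fun v => (v:ℝ)^2)]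
  have : ∑ v ∈ Vset m, ((v:ℝ))^2 = ((∑ v ∈ Vset m, v^2 : ℤ) : ℝ) := by push_cast; rfl
  rw [this]
  have h := sum_Vset_sq m
  have : ((3 * ∑ v ∈ Vset m, v^2 : ℤ) : ℝ) = ((m*(m+1)*(2*m+1) : ℤ) : ℝ) := by rw [h]
  push_cast at this
  linarith

lemma sum_weight_ite {X : Type*} [Fintype X] [DecidableEq X] (v : X) (a b : ℝ) (g : X → ℝ) :
    ∑ w : X, (if w = v then a else b) * g w = (a - b) * g v + b * ∑ w, g w := by
  have : ∀ w : X, (if w = v then a else b) * g w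
      = (if w = v then (a-b) * g w else 0) + b * g w := by
    intro w; by_cases h : w = v <;> simp [h] <;> ring
  rw [Finset.sum_congr rfl (fun w _ => this w), Finset.sum_add_distrib,
    Finset.sum_ite_eq' Finset.univ v (fun w => (a-b)*g w), ← Finset.mul_sum]
  simp

variable {Ω : Type*} [Fintype Ω]

lemma prod_space_total (n : ℕ) (w : Ω → ℝ) (hw : ∑ x, w x = 1) :
    ∑ ω : Fin n → Ω, ∏ i, w (ω i) = 1 := by
  induction n with
  | zero => simp
  | succ n ih =>
    rw [← Equiv.sum_comp (Fin.consEquiv (fun _ : Fin (n+1) => Ω))]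
    rw [Fintype.sum_prod_type]
    simp only [Fin.consEquiv_apply, Fin.prod_univ_succ, Fin.cons_zero, Fin.cons_succ]
    rw [← Finset.sum_mul_sum]
    rw [hw, ih, mul_one]

lemma prod_space_lin (n : ℕ) (w f : Ω → ℝ) (hw : ∑ x, w x = 1)
    (hf : ∑ x, w x * f x = 0) :
    ∑ ω : Fin n → Ω, (∏ i, w (ω i)) * (∑ i, f (ω i)) = 0 := by
  induction n with
  | zero => simp
  | succ n ih =>
    rw [← Equiv.sum_comp (Fin.consEquiv (fun _ : Fin (n+1) => Ω))]
    rw [Fintype.sum_prod_type]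
    simp only [Fin.consEquiv_apply, Fin.prod_univ_succ, Fin.sum_univ_succ,
      Fin.cons_zero, Fin.cons_succ]
    have : ∀ x : Ω, ∑ ω : Fin n → Ω,
        (w x * ∏ i, w (ω i)) * (f x + ∑ i, f (ω i))
        = w x * f x * (∑ ω : Fin n → Ω, ∏ i, w (ω i))
          + w x * (∑ ω : Fin n → Ω, (∏ i, w (ω i)) * (∑ i, f (ω i))) := by
      intro x
      rw [Finset.mul_sum, Finset.mul_sum, ← Finset.sum_add_distrib]
      exact Finset.sum_congr rfl (fun ω _ => by ring)
    rw [Finset.sum_congr rfl (fun x _ => this x)]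
    rw [Finset.sum_add_distrib, prod_space_total n w hw, ih]
    simp [hf]

lemma prod_space_sq (n : ℕ) (w f : Ω → ℝ) (hw : ∑ x, w x = 1)
    (hf : ∑ x, w x * f x = 0) :
    ∑ ω : Fin n → Ω, (∏ i, w (ω i)) * (∑ i, f (ω i))^2
      = n * ∑ x, w x * (f x)^2 := by
  induction n with
  | zero => simp
  | succ n ih =>
    rw [← Equiv.sum_comp (Fin.consEquiv (fun _ : Fin (n+1) => Ω))]
    rw [Fintype.sum_prod_type]
    simp only [Fin.consEquiv_apply, Fin.prod_univ_succ, Fin.sum_univ_succ,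
      Fin.cons_zero, Fin.cons_succ]
    have : ∀ x : Ω, ∑ ω : Fin n → Ω,
        (w x * ∏ i, w (ω i)) * (f x + ∑ i, f (ω i))^2
        = w x * (f x)^2 * (∑ ω : Fin n → Ω, ∏ i, w (ω i))
          + 2 * (w x * f x) * (∑ ω : Fin n → Ω, (∏ i, w (ω i)) * (∑ i, f (ω i)))
          + w x * (∑ ω : Fin n → Ω, (∏ i, w (ω i)) * (∑ i, f (ω i))^2) := by
      intro x
      rw [Finset.mul_sum, Finset.mul_sum, Finset.mul_sum, ← Finset.sum_add_distrib,
        ← Finset.sum_add_distrib]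
      exact Finset.sum_congr rfl (fun ω _ => by ring)
    rw [Finset.sum_congr rfl (fun x _ => this x)]
    rw [Finset.sum_add_distrib, Finset.sum_add_distrib,
      prod_space_total n w hw, prod_space_lin n w f hw hf, ih]
    simp only [mul_one, mul_zero, Finset.sum_const_zero, add_zero, hw, one_mul]
    have h2 : ∑ x : Ω, w x * ((n:ℝ) * ∑ y : Ω, w y * f y ^ 2)
        = (n:ℝ) * ∑ y : Ω, w y * f y ^ 2 := by
      rw [← Finset.sum_mul, hw, one_mul]
    rw [h2]
    push_cast
    ring

lemma RR_sum (m : ℕ) (lvl : ℝ) (v : Vt m) (φ : Vt m → ℝ) :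
    ∑ w : Vt m, RR m lvl v w * φ w
      = ((1 - lvl) - lvl/(2*(m:ℝ)-1)) * φ v + lvl/(2*(m:ℝ)-1) * ∑ w, φ w := by
  unfold RR
  exact sum_weight_ite v (1-lvl) (lvl/(2*(m:ℝ)-1)) φ

lemma RR_total (m : ℕ) (hm : 0 < m) (lvl : ℝ) :
    ∀ v : Vt m, ∑ w : Vt m, RR m lvl v w = 1 := by
  intro v
  have h := RR_sum m lvl v (fun _ => 1)
  simp only [mul_one] at h
  rw [h, sum_Vt_one]
  have h2 : (2*(m:ℝ) - 1) ≠ 0 := by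
    have : (1:ℝ) ≤ m := by exact_mod_cast hm
    nlinarith
  field_simp
  ring

lemma RGch_ind (k m : ℕ) (lgr lvl : ℝ) (g0 g : Fin k) (v : Vt m) (φ : Vt m → ℝ) :
    ∑ h : Fin k, ∑ w : Vt m, RGch k m lgr lvl g0 v h w * (if h = g then φ w else 0)
      = if g = g0 then (1-lgr) * ∑ w : Vt m, RR m lvl v w * φ w
        else lgr/((k:ℝ)-1) * (1/(2*(m:ℝ))) * ∑ w : Vt m, φ w := by
  have h1 : ∀ h : Fin k, ∑ w : Vt m, RGch k m lgr lvl g0 v h w * (if h = g then φ w else 0)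
      = if h = g then ∑ w : Vt m, RGch k m lgr lvl g0 v g w * φ w else 0 := by
    intro h
    by_cases hh : h = g
    · subst hh; simp
    · simp [hh]
  rw [Finset.sum_congr rfl (fun h _ => h1 h),
    Finset.sum_ite_eq' Finset.univ g
      (fun _ => ∑ w : Vt m, RGch k m lgr lvl g0 v g w * φ w)]
  simp only [Finset.mem_univ, if_true]
  unfold RGch
  by_cases hgg : g = g0
  · simp only [hgg, if_true, Finset.mul_sum]
    exact Finset.sum_congr rfl (fun w _ => by ring)
  · simp only [hgg, if_false, Finset.mul_sum]

lemma Sig0 (k m : ℕ) (hm : 0 < m) (hk : 2 ≤ k) (lgr lvl : ℝ) (g0 : Fin k) (v : Vt m) :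
    ∑ h : Fin k, ∑ w : Vt m, RGch k m lgr lvl g0 v h w = 1 := by
  have h1 : ∀ h : Fin k, ∑ w : Vt m, RGch k m lgr lvl g0 v h w
      = if h = g0 then 1 - lgr else lgr/((k:ℝ)-1) := by
    intro h
    unfold RGch
    by_cases hh : h = g0
    · simp only [hh, if_true]
      rw [← Finset.mul_sum, RR_total m hm lvl v, mul_one]
    · simp only [hh, if_false]
      rw [Finset.sum_const, Finset.card_univ]
      have hcard : (Fintype.card (Vt m) : ℝ) = 2*m := by
        have := sum_Vt_one m
        rw [Finset.sum_const, Finset.card_univ, nsmul_eq_mul, mul_one] at this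
        exact this
      rw [nsmul_eq_mul, hcard]
      have hm' : (2*(m:ℝ)) ≠ 0 := by positivity
      have hk' : ((k:ℝ) - 1) ≠ 0 := by
        have : (2:ℝ) ≤ k := by exact_mod_cast hk
        nlinarith
      field_simp
  rw [Finset.sum_congr rfl (fun h _ => h1 h)]
  have := sum_weight_ite g0 (1-lgr) (lgr/((k:ℝ)-1)) (fun _ => (1:ℝ))
  simp only [mul_one] at this
  rw [this, Finset.sum_const, Finset.card_univ, Fintype.card_fin, nsmul_eq_mul, mul_one]
  have hk' : ((k:ℝ) - 1) ≠ 0 := by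
    have : (2:ℝ) ≤ k := by exact_mod_cast hk
    nlinarith
  field_simp
  ring

lemma Mlem (k m : ℕ) (hm : 0 < m) (hk : 2 ≤ k) (lgr lvl : ℝ) (g0 g : Fin k) (v : Vt m)
    (a b c : ℝ) :
    ∑ h : Fin k, ∑ w : Vt m, RGch k m lgr lvl g0 v h w *
        (a * (if h = g then ((w:ℤ):ℝ) else 0) + b * (if h = g then ((w:ℤ):ℝ)^2 else 0) + c)
      = a * (if g = g0 then (1-lgr) * (((1 - lvl) - lvl/(2*(m:ℝ)-1)) * ((v:ℤ):ℝ)) else 0)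
        + b * (if g = g0 then
              (1-lgr) * (((1 - lvl) - lvl/(2*(m:ℝ)-1)) * ((v:ℤ):ℝ)^2
                + lvl/(2*(m:ℝ)-1) * (((m:ℝ)*(m+1)*(2*m+1))/3))
            else lgr/((k:ℝ)-1) * (1/(2*(m:ℝ))) * (((m:ℝ)*(m+1)*(2*m+1))/3))
        + c := by
  have expand : ∀ (h : Fin k) (w : Vt m), RGch k m lgr lvl g0 v h w *
        (a * (if h = g then ((w:ℤ):ℝ) else 0) + b * (if h = g then ((w:ℤ):ℝ)^2 else 0) + c)
      = a * (RGch k m lgr lvl g0 v h w * (if h = g then ((w:ℤ):ℝ) else 0))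
        + b * (RGch k m lgr lvl g0 v h w * (if h = g then ((w:ℤ):ℝ)^2 else 0))
        + c * RGch k m lgr lvl g0 v h w := by
    intro h w; ring
  rw [Finset.sum_congr rfl (fun h _ => Finset.sum_congr rfl (fun w _ => expand h w))]
  simp only [Finset.sum_add_distrib, ← Finset.mul_sum]
  rw [RGch_ind k m lgr lvl g0 g v (fun w => ((w:ℤ):ℝ)),
    RGch_ind k m lgr lvl g0 g v (fun w => ((w:ℤ):ℝ)^2),
    Sig0 k m hm hk lgr lvl g0 v, mul_one, sum_Vt_id, sum_Vt_sq]
  rw [RR_sum m lvl v (fun w => ((w:ℤ):ℝ)), RR_sum m lvl v (fun w => ((w:ℤ):ℝ)^2)]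
  rw [sum_Vt_id, sum_Vt_sq]
  by_cases hgg : g = g0 <;> simp [hgg] <;> ring


lemma mul_dsum {A B : Type*} [Fintype A] [Fintype B] (c : ℝ) (F : A → B → ℝ) :
    ∑ a : A, ∑ b : B, c * F a b = c * ∑ a : A, ∑ b : B, F a b := by
  rw [Finset.mul_sum]
  exact Finset.sum_congr rfl (fun a _ => by rw [Finset.mul_sum])

/-- per-user centered variable -/
def Xf (k m : ℕ) (A : ℝ) (g : Fin k) (x : OmegaRG k m) : ℝ :=
  A * (if x.2.2.1 = g then ((x.2.2.2 : ℤ):ℝ) else 0) - (if x.1 = g then ((x.2.1 : ℤ):ℝ) else 0)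

lemma hw1_lemma (k m : ℕ) (hm : 0 < m) (hk : 2 ≤ k)
    (θ : Fin k → ℝ) (p : Fin k → Vt m → ℝ) (lgr lvl : ℝ)
    (hpsum : ∀ g, ∑ v : Vt m, p g v = 1) (hθ1 : ∑ g, θ g = 1) :
    ∑ x : OmegaRG k m, wRG k m θ p lgr lvl x = 1 := by
  simp only [Fintype.sum_prod_type, wRG]
  have key : ∀ (g0 : Fin k) (v : Vt m),
      ∑ h : Fin k, ∑ w : Vt m, θ g0 * p g0 v * RGch k m lgr lvl g0 v h w
        = θ g0 * p g0 v := by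
    intro g0 v
    simp only [← Finset.mul_sum]
    rw [Sig0 k m hm hk lgr lvl g0 v, mul_one]
  rw [Finset.sum_congr rfl (fun g0 _ => Finset.sum_congr rfl (fun v _ => key g0 v))]
  simp only [← Finset.mul_sum, hpsum, hθ1, mul_one]

lemma hD_lemma (k m : ℕ) (hm : 0 < m) (hk : 2 ≤ k)
    (θ : Fin k → ℝ) (p : Fin k → Vt m → ℝ) (lgr lvl : ℝ) (A : ℝ)
    (hαkey : A * ((1 - lgr) * ((1 - lvl) - lvl/(2*(m:ℝ)-1))) = 1) (g : Fin k) :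
    ∑ x : OmegaRG k m, wRG k m θ p lgr lvl x * Xf k m A g x = 0 := by
  simp only [Fintype.sum_prod_type, wRG, Xf]
  have key : ∀ (g0 : Fin k) (v : Vt m),
      ∑ h : Fin k, ∑ w : Vt m, θ g0 * p g0 v * RGch k m lgr lvl g0 v h w *
        (A * (if h = g then ((w:ℤ):ℝ) else 0) - (if g0 = g then ((v:ℤ):ℝ) else 0)) = 0 := by
    intro g0 v
    have ptw : ∀ (h : Fin k) (w : Vt m),
        θ g0 * p g0 v * RGch k m lgr lvl g0 v h w *
          (A * (if h = g then ((w:ℤ):ℝ) else 0) - (if g0 = g then ((v:ℤ):ℝ) else 0))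
        = θ g0 * p g0 v * (RGch k m lgr lvl g0 v h w *
            (A * (if h = g then ((w:ℤ):ℝ) else 0)
              + 0 * (if h = g then ((w:ℤ):ℝ)^2 else 0)
              + (-(if g0 = g then ((v:ℤ):ℝ) else 0)))) := by
      intro h w; ring
    rw [Finset.sum_congr rfl (fun h _ => Finset.sum_congr rfl (fun w _ => ptw h w)),
      mul_dsum, Mlem k m hm hk lgr lvl g0 g v A 0 (-(if g0 = g then ((v:ℤ):ℝ) else 0))]
    by_cases hgg : g = g0
    · have hgg' : g0 = g := hgg.symm
      simp only [if_pos hgg, if_pos hgg']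
      linear_combination (θ g0 * p g0 v * ((v:ℤ):ℝ)) * hαkey
    · have hgg' : ¬ g0 = g := fun h => hgg h.symm
      simp only [if_neg hgg, if_neg hgg']
      ring
  rw [Finset.sum_congr rfl (fun g0 _ => Finset.sum_congr rfl (fun v _ => key g0 v))]
  simp

lemma hE_lemma (k m : ℕ) (hm : 0 < m) (hk : 2 ≤ k)
    (θ : Fin k → ℝ) (p : Fin k → Vt m → ℝ) (lgr lvl : ℝ) (A : ℝ)
    (hpsum : ∀ g, ∑ v : Vt m, p g v = 1) (hθ1 : ∑ g, θ g = 1)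
    (hαkey : A * ((1 - lgr) * ((1 - lvl) - lvl/(2*(m:ℝ)-1))) = 1)
    (hk' : ((k:ℝ) - 1) ≠ 0) :
    ∑ g : Fin k, ∑ x : OmegaRG k m, wRG k m θ p lgr lvl x * (Xf k m A g x)^2
      = (∑ g : Fin k, θ g * ∑ v : Vt m, ((v:ℤ):ℝ)^2 * p g v) * (A - 1)
        + A^2 * ((1-lgr) * (lvl/(2*(m:ℝ)-1)) + lgr/(2*(m:ℝ))) * ((m:ℝ)*(m+1)*(2*m+1)/3) := by
  have key : ∀ (g : Fin k) (g0 : Fin k) (v : Vt m),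
      ∑ h : Fin k, ∑ w : Vt m, θ g0 * p g0 v * RGch k m lgr lvl g0 v h w *
        (A * (if h = g then ((w:ℤ):ℝ) else 0) - (if g0 = g then ((v:ℤ):ℝ) else 0))^2
      = θ g0 * p g0 v *
          (if g = g0 then (A - 1) * ((v:ℤ):ℝ)^2
              + A^2 * (1-lgr) * (lvl/(2*(m:ℝ)-1)) * ((m:ℝ)*(m+1)*(2*m+1)/3)
            else A^2 * (lgr/((k:ℝ)-1)) * (1/(2*(m:ℝ))) * ((m:ℝ)*(m+1)*(2*m+1)/3)) := by
    intro g g0 v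
    have ptw : ∀ (h : Fin k) (w : Vt m),
        θ g0 * p g0 v * RGch k m lgr lvl g0 v h w *
          (A * (if h = g then ((w:ℤ):ℝ) else 0) - (if g0 = g then ((v:ℤ):ℝ) else 0))^2
        = θ g0 * p g0 v * (RGch k m lgr lvl g0 v h w *
            ((-2*A*(if g0 = g then ((v:ℤ):ℝ) else 0)) * (if h = g then ((w:ℤ):ℝ) else 0)
              + A^2 * (if h = g then ((w:ℤ):ℝ)^2 else 0)
              + (if g0 = g then ((v:ℤ):ℝ) else 0)^2)) := by
      intro h w
      by_cases hh : h = g <;> simp only [hh, if_true, if_false] <;> ring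
    rw [Finset.sum_congr rfl (fun h _ => Finset.sum_congr rfl (fun w _ => ptw h w)),
      mul_dsum, Mlem k m hm hk lgr lvl g0 g v (-2*A*(if g0 = g then ((v:ℤ):ℝ) else 0)) (A^2)
      ((if g0 = g then ((v:ℤ):ℝ) else 0)^2)]
    by_cases hgg : g = g0
    · have hgg' : g0 = g := hgg.symm
      simp only [if_pos hgg, if_pos hgg']
      linear_combination (θ g0 * p g0 v * (A - 2) * ((v:ℤ):ℝ)^2) * hαkey
    · have hgg' : ¬ g0 = g := fun h => hgg h.symm
      simp only [if_neg hgg, if_neg hgg']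
      ring
  simp only [Fintype.sum_prod_type, wRG, Xf]
  rw [Finset.sum_congr rfl (fun g _ => Finset.sum_congr rfl
    (fun g0 _ => Finset.sum_congr rfl (fun v _ => key g g0 v)))]
  have inner : ∀ (g g0 : Fin k),
      ∑ v : Vt m, θ g0 * p g0 v *
          (if g = g0 then (A - 1) * ((v:ℤ):ℝ)^2
              + A^2 * (1-lgr) * (lvl/(2*(m:ℝ)-1)) * ((m:ℝ)*(m+1)*(2*m+1)/3)
            else A^2 * (lgr/((k:ℝ)-1)) * (1/(2*(m:ℝ))) * ((m:ℝ)*(m+1)*(2*m+1)/3))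
      = if g = g0 then θ g0 * ((A - 1) * (∑ v : Vt m, ((v:ℤ):ℝ)^2 * p g0 v)
              + A^2 * (1-lgr) * (lvl/(2*(m:ℝ)-1)) * ((m:ℝ)*(m+1)*(2*m+1)/3))
        else θ g0 * (A^2 * (lgr/((k:ℝ)-1)) * (1/(2*(m:ℝ))) * ((m:ℝ)*(m+1)*(2*m+1)/3)) := by
    intro g g0
    by_cases hgg : g = g0
    · simp only [hgg, if_true]
      have e : ∀ v : Vt m, θ g0 * p g0 v *
            ((A - 1) * ((v:ℤ):ℝ)^2
              + A^2 * (1-lgr) * (lvl/(2*(m:ℝ)-1)) * ((m:ℝ)*(m+1)*(2*m+1)/3))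
          = θ g0 * ((A - 1) * (((v:ℤ):ℝ)^2 * p g0 v)
              + (A^2 * (1-lgr) * (lvl/(2*(m:ℝ)-1)) * ((m:ℝ)*(m+1)*(2*m+1)/3)) * p g0 v) := by
        intro v; ring
      rw [Finset.sum_congr rfl (fun v _ => e v)]
      rw [← Finset.mul_sum, Finset.sum_add_distrib, ← Finset.mul_sum, ← Finset.mul_sum,
        hpsum g0, mul_one]
    · simp only [hgg, if_false]
      have e : ∀ v : Vt m, θ g0 * p g0 v *
            (A^2 * (lgr/((k:ℝ)-1)) * (1/(2*(m:ℝ))) * ((m:ℝ)*(m+1)*(2*m+1)/3))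
          = θ g0 * ((A^2 * (lgr/((k:ℝ)-1)) * (1/(2*(m:ℝ))) * ((m:ℝ)*(m+1)*(2*m+1)/3)) * p g0 v) := by
        intro v; ring
      rw [Finset.sum_congr rfl (fun v _ => e v), ← Finset.mul_sum, ← Finset.mul_sum,
        hpsum g0, mul_one]
  rw [Finset.sum_congr rfl (fun g _ => Finset.sum_congr rfl (fun g0 _ => inner g g0))]
  rw [Finset.sum_comm]
  have outer : ∀ g0 : Fin k,
      ∑ g : Fin k, (if g = g0 then θ g0 * ((A - 1) * (∑ v : Vt m, ((v:ℤ):ℝ)^2 * p g0 v)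
              + A^2 * (1-lgr) * (lvl/(2*(m:ℝ)-1)) * ((m:ℝ)*(m+1)*(2*m+1)/3))
        else θ g0 * (A^2 * (lgr/((k:ℝ)-1)) * (1/(2*(m:ℝ))) * ((m:ℝ)*(m+1)*(2*m+1)/3)))
      = θ g0 * ((A - 1) * (∑ v : Vt m, ((v:ℤ):ℝ)^2 * p g0 v))
        + θ g0 * (A^2 * (1-lgr) * (lvl/(2*(m:ℝ)-1)) * ((m:ℝ)*(m+1)*(2*m+1)/3))
        + θ g0 * (A^2 * (lgr/(2*(m:ℝ))) * ((m:ℝ)*(m+1)*(2*m+1)/3)) := by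
    intro g0
    have := sum_weight_ite g0
      (θ g0 * ((A - 1) * (∑ v : Vt m, ((v:ℤ):ℝ)^2 * p g0 v)
              + A^2 * (1-lgr) * (lvl/(2*(m:ℝ)-1)) * ((m:ℝ)*(m+1)*(2*m+1)/3)))
      (θ g0 * (A^2 * (lgr/((k:ℝ)-1)) * (1/(2*(m:ℝ))) * ((m:ℝ)*(m+1)*(2*m+1)/3)))
      (fun _ => (1:ℝ))
    simp only [mul_one] at this
    rw [this, Finset.sum_const, Finset.card_univ, Fintype.card_fin, nsmul_eq_mul, mul_one]
    field_simp
    ring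
  rw [Finset.sum_congr rfl (fun g0 _ => outer g0)]
  rw [Finset.sum_add_distrib, Finset.sum_add_distrib]
  have e1 : ∀ g0 : Fin k, θ g0 * ((A - 1) * (∑ v : Vt m, ((v:ℤ):ℝ)^2 * p g0 v))
      = (θ g0 * (∑ v : Vt m, ((v:ℤ):ℝ)^2 * p g0 v)) * (A - 1) := by intro g0; ring
  rw [Finset.sum_congr rfl (fun g0 _ => e1 g0), ← Finset.sum_mul,
    ← Finset.sum_mul, ← Finset.sum_mul, hθ1]
  ring


/-- The RG estimator satisfies `E[‖Ŝ_RG − S‖²] = n·β₃`, where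
`β₃ = E[V²]·((2m−1)/((1−λ_gr)(2m(1−λ_vl)−1)) − 1)
  + (4m²−1)(m+1)(2mλ_vl(1−λ_gr) + λ_gr(2m−1))/(6(1−λ_gr)²(2m(1−λ_vl)−1)²)`
and `E[V²] = Σ_g θ_g·Σ_{v∈V} v²·p_g(v)`; the expectation is over `n` i.i.d.
RG users and the squared Euclidean norm is over the `k` coordinates.
Equivalently the relative MSE `(1/n²)·E[‖Ŝ_RG − S‖²]` equals `β₃/n`. -/
theorem stmt14 (m k n : ℕ) (hm : 0 < m) (hk : 2 ≤ k) (hn : 0 < n)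
    (p : Fin k → Vt m → ℝ)
    (hpsum : ∀ g, ∑ v : Vt m, p g v = 1)
    (hp : ∀ g v, 0 < p g v ∧ p g v < 1)
    (θ : Fin k → ℝ) (hθ0 : ∀ g, 0 ≤ θ g) (hθ1 : ∑ g, θ g = 1)
    (lgr lvl : ℝ) (hlgr : lgr ∈ Set.Ioo (0:ℝ) 1)
    (hlvl : lvl ∈ Set.Ico (0:ℝ) (1 - 1/(2*m)))
    (c : ℝ) (hc : c = ∑ g : Fin k, θ g * ∑ v : Vt m, ((v : ℤ) : ℝ)^2 * p g v) :
    (∑ ω : Fin n → OmegaRG k m,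
        (∏ i, wRG k m θ p lgr lvl (ω i)) *
          (∑ g : Fin k, (estRG k m n lgr lvl ω g - trueAggRG k m n ω g)^2))
      = n * (c * ((2*m - 1) / ((1 - lgr) * (2*m*(1 - lvl) - 1)) - 1)
          + (4*m^2 - 1) * (m + 1) *
              (2*m*lvl*(1 - lgr) + lgr*(2*m - 1))
              / (6 * (1 - lgr)^2 * (2*m*(1 - lvl) - 1)^2)) := by
  have hm1 : (1:ℝ) ≤ (m:ℝ) := by exact_mod_cast hm
  have h2m : (0:ℝ) < 2*(m:ℝ) := by linarith
  have h2m1 : (0:ℝ) < 2*(m:ℝ) - 1 := by linarith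
  have h1g : (0:ℝ) < 1 - lgr := by have := hlgr.2; linarith
  have hD : (0:ℝ) < 2*(m:ℝ)*(1 - lvl) - 1 := by
    have h2 := hlvl.2
    have hmne : (2*(m:ℝ)) ≠ 0 := ne_of_gt h2m
    have : 1/(2*(m:ℝ)) < 1 - lvl := by linarith
    have := (div_lt_iff₀ h2m).mp this
    nlinarith
  have hk2 : (2:ℝ) ≤ (k:ℝ) := by exact_mod_cast hk
  have hk' : ((k:ℝ) - 1) ≠ 0 := by nlinarith
  set A := (2*(m:ℝ) - 1) / ((1 - lgr) * (2*(m:ℝ)*(1 - lvl) - 1)) with hA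
  have hαkey : A * ((1 - lgr) * ((1 - lvl) - lvl/(2*(m:ℝ)-1))) = 1 := by
    rw [hA]
    field_simp
    ring
  have hw1 := hw1_lemma k m hm hk θ p lgr lvl hpsum hθ1
  have hdiff : ∀ (ω : Fin n → OmegaRG k m) (g : Fin k),
      estRG k m n lgr lvl ω g - trueAggRG k m n ω g = ∑ i, Xf k m A g (ω i) := by
    intro ω g
    unfold estRG trueAggRG Xf
    rw [← hA, Finset.mul_sum, ← Finset.sum_sub_distrib]
  calc (∑ ω : Fin n → OmegaRG k m,
        (∏ i, wRG k m θ p lgr lvl (ω i)) *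
          (∑ g : Fin k, (estRG k m n lgr lvl ω g - trueAggRG k m n ω g)^2))
      = ∑ ω : Fin n → OmegaRG k m, ∑ g : Fin k,
          (∏ i, wRG k m θ p lgr lvl (ω i)) * (∑ i, Xf k m A g (ω i))^2 := by
        refine Finset.sum_congr rfl (fun ω _ => ?_)
        rw [Finset.mul_sum]
        exact Finset.sum_congr rfl (fun g _ => by rw [hdiff])
    _ = ∑ g : Fin k, ∑ ω : Fin n → OmegaRG k m,
          (∏ i, wRG k m θ p lgr lvl (ω i)) * (∑ i, Xf k m A g (ω i))^2 :=
        Finset.sum_comm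
    _ = ∑ g : Fin k, (n:ℝ) * ∑ x : OmegaRG k m,
          wRG k m θ p lgr lvl x * (Xf k m A g x)^2 :=
        Finset.sum_congr rfl (fun g _ => prod_space_sq n _ _ hw1
          (hD_lemma k m hm hk θ p lgr lvl A hαkey g))
    _ = (n:ℝ) * ∑ g : Fin k, ∑ x : OmegaRG k m,
          wRG k m θ p lgr lvl x * (Xf k m A g x)^2 := by rw [Finset.mul_sum]
    _ = (n:ℝ) * (c * (A - 1)
          + A^2 * ((1-lgr) * (lvl/(2*(m:ℝ)-1)) + lgr/(2*(m:ℝ))) * ((m:ℝ)*(m+1)*(2*m+1)/3)) := by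
        rw [hE_lemma k m hm hk θ p lgr lvl A hpsum hθ1 hαkey hk', ← hc]
    _ = n * (c * (A - 1)
          + (4*m^2 - 1) * (m + 1) *
              (2*m*lvl*(1 - lgr) + lgr*(2*m - 1))
              / (6 * (1 - lgr)^2 * (2*m*(1 - lvl) - 1)^2)) := by
        congr 1
        congr 1
        rw [hA]
        have h1 : (1 - lgr) ≠ 0 := ne_of_gt h1g
        have h2 : (2*(m:ℝ)*(1 - lvl) - 1) ≠ 0 := ne_of_gt hD
        have h3 : (2*(m:ℝ) - 1) ≠ 0 := ne_of_gt h2m1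
        have h4 : (2*(m:ℝ)) ≠ 0 := ne_of_gt h2m
        field_simp
        ring
end
end
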